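/- Let D be a metric on U, let 0 < c < 1 and γ > 0, and suppose a set of representatives R ⊆ U forms a γ-net for the entire universe U. For any pair u,v with D(u,v) ≥ 2γ/(1−c), we have max_{r ∈ R} |D(r,u) − D(r,v)| ≥ c·D(u,v). Consequently, if under a distribution μ over U the probability that a pair (u,v) ~ μ × μ has D(u,v) ≥ 2γ/(1−c) is at least p, then D_R(u,v) := max_{r∈R}|D(r,u) − D(r,v)| satisfies Pr_{(u,v)~μ×μ}[D_R(u,v) ≥ c·D(u,v)] ≥ p. -/
import Mathlib


open MeasureTheory

/-- A γ-net for the whole universe gives a (p,c)-nontrivial representative set submetric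
whenever the metric is (p, 2γ/(1−c))-diffuse. -/
theorem full_net_nontrivial
    {U : Type*} [MeasurableSpace U] (D : U → U → ℝ)
    (hsymm : ∀ u v, D u v = D v u)
    (htri : ∀ u v w, D u w ≤ D u v + D v w)
    (c γ : ℝ) (hc0 : 0 < c) (hc1 : c < 1) (hγ : 0 < γ)
    (R : Finset U) (hR : R.Nonempty)
    (hnet : ∀ u : U, ∃ r ∈ R, D u r ≤ γ)
    (μ : Measure U) [IsProbabilityMeasure μ] (p : ℝ)
    (hdiff : ENNReal.ofReal p ≤ (μ.prod μ) {q : U × U | 2 * γ / (1 - c) ≤ D q.1 q.2}) :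
    (∀ u v : U, 2 * γ / (1 - c) ≤ D u v →
        c * D u v ≤ R.sup' hR fun r => |D r u - D r v|) ∧
    ENNReal.ofReal p ≤
      (μ.prod μ) {q : U × U | c * D q.1 q.2 ≤ R.sup' hR fun r => |D r q.1 - D r q.2|} := by
  have key : ∀ u v : U, 2 * γ / (1 - c) ≤ D u v →
      c * D u v ≤ R.sup' hR fun r => |D r u - D r v| := by
    intro u v huv
    obtain ⟨r, hrR, hr⟩ := hnet u
    have h1c : 0 < 1 - c := by linarith
    have hDuv : 2 * γ ≤ (1 - c) * D u v := by
      rw [div_le_iff₀ h1c] at huv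
      linarith [huv]
    have hru : D r u ≤ γ := by rw [hsymm r u]; exact hr
    have hrv : D u v - γ ≤ D r v := by
      have h2 := htri u r v
      have h3 : D u r = D r u := hsymm u r
      linarith
    have h4 : c * D u v ≤ |D r u - D r v| := by
      have h5 : c * D u v ≤ D r v - D r u := by linarith
      calc c * D u v ≤ D r v - D r u := h5
        _ ≤ |D r v - D r u| := le_abs_self _
        _ = |D r u - D r v| := abs_sub_comm _ _
    exact h4.trans (Finset.le_sup' (fun r => |D r u - D r v|) hrR)
  refine ⟨key, hdiff.trans (measure_mono ?_)⟩
  intro q hq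
  exact key q.1 q.2 hq
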